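/- Let γ be any σ-finite Borel measure on ℝ and let μ ∈ ℝ. Then the expected threshold-weighted CRPS of Gaussian predictive distributions with fixed mean μ is monotone nondecreasing in the predictive standard deviation: for all 0 < σ ≤ σ′, CRPS_γ(Φ_{μ,σ²}) ≤ CRPS_γ(Φ_{μ,σ′²}) (as an inequality in [0, ∞]). This follows from the pointwise fact that for every u ∈ ℝ fixed, σ ↦ Φ((u−μ)/σ)·(1 − Φ((u−μ)/σ)) is nondecreasing on (0, ∞). -/

import Mathlib

open MeasureTheory ProbabilityTheory Set

noncomputable section

/-- The standard normal distribution `N(0,1)` on `ℝ`. -/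
def stdNormal : Measure ℝ := gaussianReal 0 1

/-- The standard normal CDF `Φ`. -/
def Phi (x : ℝ) : ℝ := (stdNormal (Iic x)).toReal

/-- The standard normal PDF `φ`. -/
def stdPDF (x : ℝ) : ℝ := (Real.sqrt (2 * Real.pi))⁻¹ * Real.exp (-(x ^ 2) / 2)

/-- The CDF of the normal distribution `N(μ, σ²)`: `Φ_{μ,σ²}(u) = Φ((u - μ)/σ)`. -/
def normCDF (μ σ : ℝ) (u : ℝ) : ℝ := Phi ((u - μ) / σ)

/-- The normal distribution `N(μ, σ²)` as a measure on `ℝ`. -/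
def gaussMeasure (μ σ : ℝ) : Measure ℝ := gaussianReal μ ⟨σ ^ 2, sq_nonneg σ⟩

/-- Threshold-weighted CRPS of a predictive CDF `F` at observation `y`, with weighting
measure `γ`: `∫ (F u - 1{y ≤ u})² dγ(u)`. -/
def twCRPS (γ : Measure ℝ) (F : ℝ → ℝ) (y : ℝ) : ℝ :=
  ∫ u, (F u - (Ici y).indicator (fun _ => (1 : ℝ)) u) ^ 2 ∂γ

/-- Expected threshold-weighted CRPS of the Gaussian `N(μ, σ²)` with weighting measure `γ`:
the expectation of `y ↦ CRPS_γ(Φ_{μ,σ²}, y)` for `y ∼ N(μ, σ²)`. -/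
def etwCRPS (γ : Measure ℝ) (μ σ : ℝ) : ℝ :=
  ∫ y, twCRPS γ (normCDF μ σ) y ∂(gaussMeasure μ σ)

/-- `γ₁`: the Borel measure on `ℝ` with Lebesgue density `u ↦ 1{u ≥ t}`. -/
def gamma1 (t : ℝ) : Measure ℝ :=
  volume.withDensity ((Ici t).indicator fun _ => (1 : ENNReal))

/-- `γ₂`: the Borel measure on `ℝ` with Lebesgue density `u ↦ (1/σγ) φ((u - t)/σγ)`. -/
def gamma2 (t σγ : ℝ) : Measure ℝ :=
  volume.withDensity fun u => ENNReal.ofReal (1 / σγ * stdPDF ((u - t) / σγ))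

end

/-- Expected threshold-weighted CRPS of the Gaussian `N(μ, σ²)` with weighting measure `γ`,
as an element of `[0, ∞]` (double lower integral). -/
noncomputable def etwCRPSL (γ : Measure ℝ) (μ σ : ℝ) : ENNReal :=
  ∫⁻ y, (∫⁻ u, ENNReal.ofReal
      ((normCDF μ σ u - (Ici y).indicator (fun _ => (1 : ℝ)) u) ^ 2) ∂γ) ∂(gaussMeasure μ σ)

instance : IsProbabilityMeasure stdNormal := by unfold stdNormal; infer_instance
instance (μ σ : ℝ) : IsProbabilityMeasure (gaussMeasure μ σ) := by unfold gaussMeasure; exact instIsProbabilityMeasureGaussianReal μ _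

lemma Phi_mono : Monotone Phi := by
  intro x y h
  exact ENNReal.toReal_mono (measure_ne_top _ _) (measure_mono (Iic_subset_Iic.2 h))

lemma Phi_nonneg (x : ℝ) : 0 ≤ Phi x := ENNReal.toReal_nonneg

lemma Phi_le_one (x : ℝ) : Phi x ≤ 1 := by
  have := prob_le_one (μ := stdNormal) (s := Iic x)
  unfold Phi
  calc (stdNormal (Iic x)).toReal ≤ (1 : ENNReal).toReal :=
    ENNReal.toReal_mono (by simp) this
  _ = 1 := by simp

lemma stdNormal_map_neg : stdNormal.map (fun x => (-1 : ℝ) * x) = stdNormal := by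
  unfold stdNormal
  rw [gaussianReal_map_const_mul]
  congr 1 <;> [skip; congr 1] <;> norm_num

lemma stdNormal_singleton (x : ℝ) : stdNormal {x} = 0 := by
  unfold stdNormal
  rw [gaussianReal_of_var_ne_zero _ (by norm_num)]
  exact withDensity_absolutelyContinuous _ _ (measure_singleton x)

lemma Phi_neg (x : ℝ) : Phi (-x) = 1 - Phi x := by
  have h1 : stdNormal (Iic (-x)) = stdNormal (Ici x) := by
    conv_lhs => rw [← stdNormal_map_neg]
    rw [Measure.map_apply (by fun_prop) measurableSet_Iic]
    congr 1
    ext y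
    simp only [mem_preimage, mem_Iic, mem_Ici]
    constructor <;> intro h <;> linarith
  have h2 : stdNormal (Ici x) = stdNormal (Ioi x) := by
    apply le_antisymm
    · calc stdNormal (Ici x) = stdNormal (Ioi x ∪ {x}) := by rw [Ioi_union_left]
      _ ≤ stdNormal (Ioi x) + stdNormal {x} := measure_union_le _ _
      _ = stdNormal (Ioi x) := by rw [stdNormal_singleton, add_zero]
    · exact measure_mono Ioi_subset_Ici_self
  have h3 : stdNormal (Ioi x) = 1 - stdNormal (Iic x) := by
    rw [← compl_Iic]
    exact prob_compl_eq_one_sub measurableSet_Iic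
  unfold Phi
  rw [h1, h2, h3, ENNReal.toReal_sub_of_le prob_le_one (by simp)]
  simp

lemma gaussMeasure_eq_map (μ σ : ℝ) : gaussMeasure μ σ = stdNormal.map (fun x => σ * x + μ) := by
  have h1 : stdNormal.map (fun x => σ * x) = gaussianReal 0 (NNReal.mk (σ ^ 2) (sq_nonneg σ)) := by
    unfold stdNormal
    rw [show (fun x : ℝ => σ * x) = (σ * ·) by rfl, gaussianReal_map_const_mul]
    norm_num
  have h2 : stdNormal.map (fun x => σ * x + μ)
      = (stdNormal.map (fun x => σ * x)).map (· + μ) := by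
    rw [Measure.map_map (by fun_prop) (by fun_prop)]
    rfl
  rw [h2, h1, gaussianReal_map_add_const, zero_add]
  rfl

lemma gaussMeasure_Iic {σ : ℝ} (hσ : 0 < σ) (μ u : ℝ) :
    gaussMeasure μ σ (Iic u) = ENNReal.ofReal (normCDF μ σ u) := by
  rw [gaussMeasure_eq_map, Measure.map_apply (by fun_prop) measurableSet_Iic]
  have : (fun x : ℝ => σ * x + μ) ⁻¹' Iic u = Iic ((u - μ) / σ) := by
    ext x
    simp only [mem_preimage, mem_Iic, le_div_iff₀ hσ]
    constructor <;> intro h <;> nlinarith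
  rw [this]
  unfold normCDF Phi
  rw [ENNReal.ofReal_toReal (measure_ne_top _ _)]

lemma normCDF_nonneg (μ σ u : ℝ) : 0 ≤ normCDF μ σ u := Phi_nonneg _
lemma normCDF_le_one (μ σ u : ℝ) : normCDF μ σ u ≤ 1 := Phi_le_one _

lemma key_pointwise (μ u σ σ' : ℝ) (hσ : 0 < σ) (h : σ ≤ σ') :
    normCDF μ σ u * (1 - normCDF μ σ u) ≤ normCDF μ σ' u * (1 - normCDF μ σ' u) := by
  have hσ' : 0 < σ' := lt_of_lt_of_le hσ h
  set a := u - μ with ha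
  set p := Phi (a / σ) with hp
  set p' := Phi (a / σ') with hp'
  have key : 0 ≤ (p - p') * (p + p' - 1) := by
    rcases le_or_gt 0 a with hA | hA
    · have hx : a / σ' ≤ a / σ := by gcongr
      have hx0 : 0 ≤ a / σ' := div_nonneg hA hσ'.le
      have h1 : p' ≤ p := Phi_mono hx
      have h2 : 1 - p' ≤ p := by
        rw [← Phi_neg]
        exact Phi_mono (by linarith)
      nlinarith
    · have hx : a / σ ≤ a / σ' := by
        rw [div_le_div_iff₀ hσ hσ']
        nlinarith
      have hx0 : a / σ' ≤ 0 := div_nonpos_of_nonpos_of_nonneg hA.le hσ'.le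
      have h1 : p ≤ p' := Phi_mono hx
      have h2 : p' ≤ 1 - p := by
        rw [← Phi_neg]
        exact Phi_mono (by linarith)
      nlinarith
  show p * (1 - p) ≤ p' * (1 - p')
  nlinarith

lemma normCDF_measurable (μ σ : ℝ) : Measurable (normCDF μ σ) := by
  have : Measurable Phi := Phi_mono.measurable
  exact this.comp (by fun_prop)

lemma etwCRPSL_eq (γ : Measure ℝ) [SigmaFinite γ] (μ : ℝ) {σ : ℝ} (hσ : 0 < σ) :
    etwCRPSL γ μ σ = ∫⁻ u, ENNReal.ofReal (normCDF μ σ u * (1 - normCDF μ σ u)) ∂γ := by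
  have hmeas : Measurable (fun p : ℝ × ℝ => ENNReal.ofReal
      ((normCDF μ σ p.2 - (Ici p.1).indicator (fun _ => (1 : ℝ)) p.2) ^ 2)) := by
    have hind : (fun p : ℝ × ℝ => (Ici p.1).indicator (fun _ => (1 : ℝ)) p.2)
        = {p : ℝ × ℝ | p.1 ≤ p.2}.indicator (fun _ => (1 : ℝ)) := by
      ext p
      by_cases h : p.1 ≤ p.2 <;> simp [indicator, h]
    have h1 : Measurable (fun p : ℝ × ℝ => (Ici p.1).indicator (fun _ => (1 : ℝ)) p.2) := by
      rw [hind]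
      exact Measurable.indicator measurable_const (measurableSet_le measurable_fst measurable_snd)
    exact (((normCDF_measurable μ σ).comp measurable_snd).sub h1).pow_const 2 |>.ennreal_ofReal
  unfold etwCRPSL
  rw [lintegral_lintegral_swap hmeas.aemeasurable]
  apply lintegral_congr
  intro u
  set c := normCDF μ σ u with hc
  have hc0 : 0 ≤ c := normCDF_nonneg μ σ u
  have hc1 : c ≤ 1 := normCDF_le_one μ σ u
  have hpt : ∀ y : ℝ, ENNReal.ofReal ((c - (Ici y).indicator (fun _ => (1 : ℝ)) u) ^ 2)
      = (Iic u).indicator (fun _ => ENNReal.ofReal ((c - 1) ^ 2)) y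
        + (Iic u)ᶜ.indicator (fun _ => ENNReal.ofReal (c ^ 2)) y := by
    intro y
    by_cases h : y ≤ u
    · simp [indicator, h, not_lt.mpr h]
    · simp [indicator, h, lt_of_not_ge h]
  calc ∫⁻ y, ENNReal.ofReal ((c - (Ici y).indicator (fun _ => (1 : ℝ)) u) ^ 2) ∂(gaussMeasure μ σ)
      = ∫⁻ y, ((Iic u).indicator (fun _ => ENNReal.ofReal ((c - 1) ^ 2)) y
        + (Iic u)ᶜ.indicator (fun _ => ENNReal.ofReal (c ^ 2)) y) ∂(gaussMeasure μ σ) := by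
        exact lintegral_congr hpt
    _ = ENNReal.ofReal ((c - 1) ^ 2) * gaussMeasure μ σ (Iic u)
        + ENNReal.ofReal (c ^ 2) * gaussMeasure μ σ (Iic u)ᶜ := by
        rw [lintegral_add_left (Measurable.indicator measurable_const measurableSet_Iic),
          lintegral_indicator_const measurableSet_Iic,
          lintegral_indicator_const measurableSet_Iic.compl]
    _ = ENNReal.ofReal ((c - 1) ^ 2) * ENNReal.ofReal c
        + ENNReal.ofReal (c ^ 2) * ENNReal.ofReal (1 - c) := by
        rw [gaussMeasure_Iic hσ, prob_compl_eq_one_sub measurableSet_Iic, gaussMeasure_Iic hσ,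
          ← hc]
        congr 1
        rw [ENNReal.ofReal_sub _ hc0, ENNReal.ofReal_one]
    _ = ENNReal.ofReal (c * (1 - c)) := by
        rw [← ENNReal.ofReal_mul (by positivity), ← ENNReal.ofReal_mul (by positivity),
          ← ENNReal.ofReal_add (by positivity) (by nlinarith)]
        congr 1
        ring

theorem stmt_15 (γ : Measure ℝ) [SigmaFinite γ] (μ : ℝ) :
    (∀ σ σ' : ℝ, 0 < σ → σ ≤ σ' → etwCRPSL γ μ σ ≤ etwCRPSL γ μ σ') ∧
      ∀ u σ σ' : ℝ, 0 < σ → σ ≤ σ' →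
        normCDF μ σ u * (1 - normCDF μ σ u) ≤ normCDF μ σ' u * (1 - normCDF μ σ' u) := by
  constructor
  · intro σ σ' hσ h
    rw [etwCRPSL_eq γ μ hσ, etwCRPSL_eq γ μ (hσ.trans_le h)]
    exact lintegral_mono fun u => ENNReal.ofReal_le_ofReal (key_pointwise μ u σ σ' hσ h)
  · exact fun u σ σ' hσ h => key_pointwise μ u σ σ' hσ h
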